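/- Every locally nilpotent derivation of K[x,y] has zero divergence: if D = f·∂/∂x + g·∂/∂y is locally nilpotent, then ∂f/∂x + ∂g/∂y = 0. -/

import Mathlib

/-!
Write `c = f_x + g_y` and `J(u, v) = u_x v_y - u_y v_x`. A direct computation gives
`(D + c) J(u, v) = J(D u, v) + J(u, D v)`, so by the Leibniz rule
`(D + c)^n 1 = (D + c)^n J(x, y) = ∑ (n choose i) J(D^i x, D^(n-i) y)`,
which vanishes once `n ≥ ν(x) + ν(y)`, where `ν(a)` is the least `n` with `D^n a = 0`.
On the other hand `ν` is a degree function: `ν(D a) < ν(a)` and `ν(a b) = ν(a) + ν(b) - 1`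
for `a, b ≠ 0` (Leibniz rule in a domain of characteristic zero). Hence if `c ≠ 0` then
`ν(D w) < ν(w) ≤ ν(c w)`, so `D + c` is injective and `(D + c)^n 1 ≠ 0` for all `n`.
-/

open MvPolynomial Finset

theorem iterate_apply_eq_sum_choose {M N P F : Type*} [AddCommMonoid P] [FunLike F P P]
    [AddMonoidHomClass F P P] (e : F) (B : M → N → P) (d₁ : M → M) (d₂ : N → N)
    (hleib : ∀ a b, e (B a b) = B (d₁ a) b + B a (d₂ b)) (n : ℕ) (a : M) (b : N) :
    e^[n] (B a b) = ∑ ij ∈ antidiagonal n, n.choose ij.1 • B (d₁^[ij.1] a) (d₂^[ij.2] b) := by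
  induction n with
  | zero => simp
  | succ n ih =>
    rw [sum_antidiagonal_choose_succ_nsmul (fun i j => B (d₁^[i] a) (d₂^[j] b)) n]
    simp only [Function.iterate_succ_apply', ih, map_sum, map_nsmul, hleib, smul_add,
      sum_add_distrib]
    rw [add_comm]
    congr 1
    refine sum_congr rfl fun ⟨i, j⟩ hij ↦ ?_
    rw [n.choose_symm_of_eq_add (mem_antidiagonal.1 hij).symm]

namespace Derivation

variable {R A : Type*} [CommSemiring R] [CommRing A] [Algebra R A] (D : Derivation R A A)

theorem iterate_apply_mul (n : ℕ) (a b : A) :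
    D^[n] (a * b) = ∑ ij ∈ antidiagonal n, n.choose ij.1 • (D^[ij.1] a * D^[ij.2] b) :=
  iterate_apply_eq_sum_choose D (· * ·) D D
    (fun a b => by rw [leibniz, smul_eq_mul, smul_eq_mul, add_comm, mul_comm b]) n a b

theorem sum_smul_apply {ι : Type*} (s : Finset ι) (c : ι → A) (d : ι → Derivation R A A)
    (a : A) : (∑ i ∈ s, c i • d i) a = ∑ i ∈ s, c i * d i a := by
  rw [← coeFnAddMonoidHom_apply, map_sum, Finset.sum_apply]
  rfl

/-- For a locally nilpotent `D`, this is `deg_D a + 1`, with value `0` exactly at `a = 0`. -/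
noncomputable def nilIndex (a : A) : ℕ :=
  sInf {n | D^[n] a = 0}

variable {D}

theorem nilIndex_neg (a : A) : D.nilIndex (-a) = D.nilIndex a := by
  simp only [nilIndex, iterate_map_neg, neg_eq_zero]

variable (hD : ∀ a, ∃ n, D^[n] a = 0)
include hD

theorem iterate_eq_zero_iff {a : A} {m : ℕ} : D^[m] a = 0 ↔ D.nilIndex a ≤ m := by
  refine ⟨fun h => Nat.sInf_le h, fun h => ?_⟩
  have hmem : D^[D.nilIndex a] a = 0 := Nat.sInf_mem (hD a)
  obtain ⟨k, rfl⟩ := Nat.exists_eq_add_of_le h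
  rw [add_comm, Function.iterate_add_apply, hmem, iterate_map_zero]

theorem nilIndex_pos {a : A} (ha : a ≠ 0) : 0 < D.nilIndex a := by
  by_contra h
  exact ha ((iterate_eq_zero_iff hD (m := 0)).2 (by omega))

theorem nilIndex_apply_lt {a : A} (ha : a ≠ 0) : D.nilIndex (D a) < D.nilIndex a := by
  obtain ⟨p, hp⟩ := Nat.exists_eq_add_one_of_ne_zero (nilIndex_pos hD ha).ne'
  have : D^[p] (D a) = 0 := by
    rw [← Function.iterate_succ_apply, iterate_eq_zero_iff hD, hp]
  have := (iterate_eq_zero_iff hD).1 this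
  omega

theorem nilIndex_mul [IsDomain A] [CharZero A] {a b : A} (ha : a ≠ 0) (hb : b ≠ 0) :
    D.nilIndex (a * b) + 1 = D.nilIndex a + D.nilIndex b := by
  obtain ⟨p, hp⟩ := Nat.exists_eq_add_one_of_ne_zero (nilIndex_pos hD ha).ne'
  obtain ⟨q, hq⟩ := Nat.exists_eq_add_one_of_ne_zero (nilIndex_pos hD hb).ne'
  have iter_a {i : ℕ} : D^[i] a = 0 ↔ p < i := by rw [iterate_eq_zero_iff hD]; omega
  have iter_b {j : ℕ} : D^[j] b = 0 ↔ q < j := by rw [iterate_eq_zero_iff hD]; omega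
  have top : D^[p + q] (a * b) ≠ 0 := by
    rw [iterate_apply_mul, sum_eq_single ⟨p, q⟩]
    · exact smul_ne_zero (Nat.choose_pos (by omega)).ne'
        (mul_ne_zero (iter_a.not.2 (by omega)) (iter_b.not.2 (by omega)))
    · rintro ⟨i, j⟩ hij hne
      rw [HasAntidiagonal.mem_antidiagonal] at hij
      rcases lt_or_ge p i with hi | hi
      · rw [iter_a.2 hi, zero_mul, smul_zero]
      · rw [iter_b.2 (by grind), mul_zero, smul_zero]
    · simp
  have vanish : D^[p + q + 1] (a * b) = 0 := by
    rw [iterate_apply_mul]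
    refine sum_eq_zero fun ⟨i, j⟩ hij => ?_
    rw [HasAntidiagonal.mem_antidiagonal] at hij
    rcases lt_or_ge p i with hi | hi
    · rw [iter_a.2 hi, zero_mul, smul_zero]
    · rw [iter_b.2 (by omega), mul_zero, smul_zero]
  rw [Ne, iterate_eq_zero_iff hD] at top
  rw [iterate_eq_zero_iff hD] at vanish
  omega

theorem apply_add_mul_ne_zero [IsDomain A] [CharZero A] {c w : A} (hc : c ≠ 0) (hw : w ≠ 0) :
    D w + c * w ≠ 0 := by
  intro h
  have hDw : D.nilIndex (D w) = D.nilIndex (c * w) := by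
    rw [eq_neg_of_add_eq_zero_left h, nilIndex_neg]
  have := nilIndex_mul hD hc hw
  have := nilIndex_pos hD hc
  have := nilIndex_apply_lt hD hw
  omega

theorem iterate_apply_add_mul_ne_zero [IsDomain A] [CharZero A] {c w : A} (hc : c ≠ 0)
    (hw : w ≠ 0) (n : ℕ) : (fun w => D w + c * w)^[n] w ≠ 0 := by
  induction n generalizing w with
  | zero => exact hw
  | succ n ih => exact ih (apply_add_mul_ne_zero hD hc hw)

end Derivation

namespace MvPolynomial

variable {R : Type*} [CommRing R]

section

variable {σ : Type*}

theorem pderiv_comm (i j : σ) (f : MvPolynomial σ R) :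
    pderiv i (pderiv j f) = pderiv j (pderiv i f) := by
  have hcomm : ⁅pderiv i, pderiv j⁆ = (0 : Derivation R (MvPolynomial σ R) (MvPolynomial σ R)) :=
    derivation_ext fun k => by
      rw [Derivation.commutator_apply]
      classical simp [pderiv_X, Pi.single_apply, apply_ite]
  have := congr($hcomm f)
  rw [Derivation.commutator_apply] at this
  exact sub_eq_zero.1 this

variable [Fintype σ] (D : Derivation R (MvPolynomial σ R) (MvPolynomial σ R))

theorem derivation_eq_sum_mul_pderiv (f : MvPolynomial σ R) :
    D f = ∑ i, D (X i) * pderiv i f := by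
  classical
  have : D = ∑ i, D (X i) • pderiv i :=
    derivation_ext fun k => by simp [Derivation.sum_smul_apply, pderiv_X, Pi.single_apply]
  conv_lhs => rw [this]
  exact Derivation.sum_smul_apply _ _ _ f

noncomputable def divergence : MvPolynomial σ R :=
  ∑ i, pderiv i (D (X i))

end

noncomputable def jacobian (f g : MvPolynomial (Fin 2) R) : MvPolynomial (Fin 2) R :=
  pderiv 0 f * pderiv 1 g - pderiv 1 f * pderiv 0 g

theorem jacobian_X : jacobian (X 0) (X 1 : MvPolynomial (Fin 2) R) = 1 := by
  simp [jacobian, pderiv_X]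

variable (D : Derivation R (MvPolynomial (Fin 2) R) (MvPolynomial (Fin 2) R))

theorem apply_jacobian_add_divergence_mul (f g : MvPolynomial (Fin 2) R) :
    D (jacobian f g) + divergence D * jacobian f g = jacobian (D f) g + jacobian f (D g) := by
  rw [jacobian, derivation_eq_sum_mul_pderiv D (_ - _), derivation_eq_sum_mul_pderiv D f,
    derivation_eq_sum_mul_pderiv D g]
  simp only [jacobian, divergence, Fin.sum_univ_two, map_sub, map_add, pderiv_mul]
  rw [pderiv_comm 1 0 f, pderiv_comm 1 0 g]
  ring

theorem exists_iterate_add_divergence_mul_one_eq_zero (hD : ∀ a, ∃ n, D^[n] a = 0) :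
    ∃ n, (fun w => D w + divergence D * w)^[n] 1 = 0 := by
  let E := D.toAddMonoidHom + AddMonoidHom.mulLeft (divergence D)
  refine ⟨D.nilIndex (X 0) + D.nilIndex (X 1), ?_⟩
  change E^[_] 1 = 0
  rw [← jacobian_X, iterate_apply_eq_sum_choose E jacobian D D
    (fun f g => apply_jacobian_add_divergence_mul D f g)]
  refine sum_eq_zero fun ⟨i, j⟩ hij => ?_
  rw [HasAntidiagonal.mem_antidiagonal] at hij
  rcases le_or_gt (D.nilIndex (X 0)) i with hi | hi
  · simp [(Derivation.iterate_eq_zero_iff hD).2 hi, jacobian]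
  · simp [(Derivation.iterate_eq_zero_iff hD).2 (by omega : D.nilIndex (X 1) ≤ j), jacobian]

end MvPolynomial

/-- Every locally nilpotent derivation `D = f∂/∂x + g∂/∂y` of `K[x,y]` has zero divergence:
`f_x + g_y = 0`, where `f = D x` and `g = D y`. -/
theorem lnd_divergence_zero
    (K : Type*) [Field K] [CharZero K]
    (D : Derivation K (MvPolynomial (Fin 2) K) (MvPolynomial (Fin 2) K))
    (hln : ∀ h : MvPolynomial (Fin 2) K, ∃ n : ℕ, (fun x => D x)^[n] h = 0) :
    pderiv 0 (D (X 0)) + pderiv 1 (D (X 1)) = 0 := by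
  by_contra hc
  have hdiv : divergence D ≠ 0 := by rwa [divergence, Fin.sum_univ_two]
  obtain ⟨n, hn⟩ := exists_iterate_add_divergence_mul_one_eq_zero D hln
  exact Derivation.iterate_apply_add_mul_ne_zero hln hdiv one_ne_zero n hn
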